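/- arXiv:1205.4416 — 8 statements merged into one kernel-verified Lean document; each statement's English description precedes it below -/
import Mathlib

section
/- Suppose v = (a,b,c,d)ᵗ ∈ ℤ⁴ satisfies F(v) = 0, and set A = a+b, B = (a+b-c+d)/2, C = a+d. Then B² - AC = -a², i.e., the binary quadratic form f(x,y) = Ax² + 2Bxy + Cy² has discriminant 4(B²-AC) = -4a². -/
/-- The Descartes quadratic form. -/
def DescartesForm (a b c d : ℤ) : ℤ :=
  2 * (a ^ 2 + b ^ 2 + c ^ 2 + d ^ 2) - (a + b + c + d) ^ 2

theorem descartes_discriminant (a b c d B : ℤ) (h : DescartesForm a b c d = 0)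
    (hB : 2 * B = a + b - c + d) :
    B ^ 2 - (a + b) * (a + d) = -a ^ 2 := by
  unfold DescartesForm at h
  have h4 : (4:ℤ) * (B ^ 2 - (a + b) * (a + d) - (-a ^ 2)) = 0 := by
    linear_combination (2 * B + (a + b - c + d)) * hB + h
  linarith
end

section
/- Let v = (a,b,c,d)ᵗ with F(v)=0, and set A=a+b, B=(a+b-c+d)/2, C=a+d. If the quadruple is primitive, i.e. gcd(a,b,c,d)=1, then gcd(A,B,C)=1. -/
theorem descartesForm_eq_four_mul {a b c d B : ℤ} (hB : 2 * B = a + b - c + d) :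
    DescartesForm a b c d = 4 * (a ^ 2 + B ^ 2 - (a + b) * (a + d)) := by
  obtain rfl : c = a + b + d - 2 * B := by linarith
  unfold DescartesForm
  ring

theorem sq_add_sq_eq_mul_of_descartesForm_eq_zero {a b c d B : ℤ}
    (h : DescartesForm a b c d = 0) (hB : 2 * B = a + b - c + d) :
    a ^ 2 + B ^ 2 = (a + b) * (a + d) := by
  rw [descartesForm_eq_four_mul hB] at h
  linarith

theorem Int.dvd_of_sq_add_sq_eq_mul {g x y u v : ℤ} (h : x ^ 2 + y ^ 2 = u * v)
    (hy : g ∣ y) (hu : g ∣ u) (hv : g ∣ v) : g ∣ x := by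
  have huv : g ^ 2 ∣ u * v := pow_two g ▸ mul_dvd_mul hu hv
  have hx : g ^ 2 ∣ x ^ 2 := by
    rw [eq_sub_of_add_eq h]
    exact dvd_sub huv (pow_dvd_pow_of_dvd hy 2)
  exact (Int.pow_dvd_pow_iff two_ne_zero).mp hx

theorem dvd_gcd_of_dvd_of_descartesForm_eq_zero {a b c d B g : ℤ}
    (h : DescartesForm a b c d = 0) (hB : 2 * B = a + b - c + d)
    (hgA : g ∣ a + b) (hgB : g ∣ B) (hgC : g ∣ a + d) :
    g ∣ Int.gcd (Int.gcd (Int.gcd a b) c) d := by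
  have hga : g ∣ a :=
    Int.dvd_of_sq_add_sq_eq_mul (sq_add_sq_eq_mul_of_descartesForm_eq_zero h hB) hgB hgA hgC
  have hgb : g ∣ b := by simpa using dvd_sub hgA hga
  have hgd : g ∣ d := by simpa using dvd_sub hgC hga
  have hgc : g ∣ c := by
    have hc : c = (a + b) + d - 2 * B := by linarith
    exact hc ▸ dvd_sub (dvd_add hgA hgd) (dvd_mul_of_dvd_right hgB 2)
  exact Int.dvd_coe_gcd (Int.dvd_coe_gcd (Int.dvd_coe_gcd hga hgb) hgc) hgd

theorem descartes_primitive_form (a b c d B : ℤ) (h : DescartesForm a b c d = 0)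
    (hB : 2 * B = a + b - c + d)
    (hprim : Int.gcd (Int.gcd (Int.gcd a b) c) d = 1) :
    Int.gcd (Int.gcd (a + b) B) (a + d) = 1 := by
  have hdvd := dvd_gcd_of_dvd_of_descartesForm_eq_zero h hB
    ((Int.gcd_dvd_left _ _).trans (Int.gcd_dvd_left _ _))
    ((Int.gcd_dvd_left _ _).trans (Int.gcd_dvd_right _ _)) (Int.gcd_dvd_right _ _)
  rw [hprim] at hdvd
  exact Nat.dvd_one.mp (Int.natCast_dvd_natCast.mp hdvd)
end

section
/- Let q₀ ≥ 1 odd, (r,q₀) = 1, and let f(x,y) = Ax² + 2Bxy + Cy² with (C,q₀) = 1 and AC - B² = a². Define S_f(q₀,r;n,m) = q₀⁻² ∑_{k,ℓ mod q₀} e((r·f(k,ℓ) + nk + mℓ)/q₀). Then |S_f(q₀,r;n,m)| ≤ q₀^{-1/2}. -/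
open Complex Finset

/-- The normalized complete exponential sum
`S_f(q₀,r;n,m) = q₀⁻² ∑_{k,ℓ mod q₀} e((r f(k,ℓ) + nk + mℓ)/q₀)`
for `f(x,y) = Ax² + 2Bxy + Cy²`. -/
noncomputable def Sf (A B C : ℤ) (q₀ : ℕ) (r n m : ℤ) : ℂ :=
  ((q₀ : ℂ) ^ 2)⁻¹ *
    ∑ k ∈ Finset.range q₀, ∑ l ∈ Finset.range q₀,
      Complex.exp (2 * Real.pi * Complex.I *
        ((r * (A * (k : ℤ) ^ 2 + 2 * B * k * l + C * (l : ℤ) ^ 2) + n * k + m * l : ℤ) : ℂ)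
          / (q₀ : ℂ))

/-!
For fixed `k`, the sum over `ℓ` is a quadratic Gauss sum with leading coefficient `rC`, a unit
modulo the odd modulus `q₀`, so it has absolute value exactly `√q₀`. Bounding the outer sum
over `k` trivially gives `|S_f| ≤ q₀⁻² · q₀ · √q₀ = q₀^{-1/2}`.
-/

namespace AddChar

open ComplexConjugate

variable {R : Type*} [CommRing R] [Fintype R] {ψ : AddChar R ℂ}

theorem sum_quadratic_mul_conj (hψ : ψ.IsPrimitive) {c : R} (hc : IsUnit (2 * c)) (d e : R) :
    (∑ x, ψ (c * x ^ 2 + d * x + e)) * conj (∑ x, ψ (c * x ^ 2 + d * x + e)) =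
      Fintype.card R := by
  classical
  -- With `x = y + h`, the phase difference is linear in `y`, and summing over `y` kills `h ≠ 0`.
  have hshift : ∀ y h : R, c * (y + h) ^ 2 + d * (y + h) + e + -(c * y ^ 2 + d * y + e) =
      (c * h ^ 2 + d * h) + y * (2 * c * h) := fun y h => by ring
  calc (∑ x, ψ (c * x ^ 2 + d * x + e)) * conj (∑ x, ψ (c * x ^ 2 + d * x + e))
      = ∑ y, ∑ x, ψ (c * x ^ 2 + d * x + e + -(c * y ^ 2 + d * y + e)) := by
        simp only [map_sum, sum_mul_sum, ← map_neg_eq_conj, ← map_add_eq_mul]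
        exact sum_comm
    _ = ∑ y, ∑ h, ψ (c * h ^ 2 + d * h) * ψ (y * (2 * c * h)) := by
        refine sum_congr rfl fun y _ => ?_
        rw [← Equiv.sum_comp (Equiv.addLeft y)]
        simp only [Equiv.coe_addLeft, hshift, map_add_eq_mul]
    _ = ∑ h, ψ (c * h ^ 2 + d * h) * ∑ y, ψ (y * (2 * c * h)) := by
        rw [sum_comm]
        simp only [mul_sum]
    _ = Fintype.card R := by
        simp only [sum_mulShift _ hψ, hc.mul_right_eq_zero]
        simp

theorem norm_sum_quadratic (hψ : ψ.IsPrimitive) {c : R} (hc : IsUnit (2 * c)) (d e : R) :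
    ‖∑ x, ψ (c * x ^ 2 + d * x + e)‖ = √(Fintype.card R) := by
  have h := Complex.mul_conj' (∑ x, ψ (c * x ^ 2 + d * x + e))
  rw [sum_quadratic_mul_conj hψ hc d e] at h
  rw [← Real.sqrt_sq (norm_nonneg _)]
  exact congrArg Real.sqrt (mod_cast h.symm)

end AddChar

namespace ZMod

theorem sum_range_natCast {M : Type*} [AddCommMonoid M] {N : ℕ} [NeZero N] (F : ZMod N → M) :
    ∑ l ∈ range N, F l = ∑ y : ZMod N, F y :=
  sum_nbij' (fun l => (l : ZMod N)) (fun y => y.val) (fun _ _ => mem_univ _)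
    (fun y _ => mem_range.mpr y.val_lt) (fun _ hl => val_cast_of_lt (mem_range.mp hl))
    (fun y _ => natCast_zmod_val y) (fun _ _ => rfl)

theorem norm_sum_range_exp_quadratic {N : ℕ} (hN : Odd N) {c : ℤ} (hc : IsCoprime c N)
    (d e : ℤ) :
    ‖∑ l ∈ range N,
        exp (2 * Real.pi * I * ((c * (l : ℤ) ^ 2 + d * l + e : ℤ) : ℂ) / N)‖ = √N := by
  have : NeZero N := ⟨hN.pos.ne'⟩
  have h2 : IsUnit (2 : ZMod N) := (isUnit_iff_coprime 2 N).mpr (Nat.coprime_two_left.mpr hN)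
  have hGauss := AddChar.norm_sum_quadratic (isPrimitive_stdAddChar N)
    (h2.mul (unitOfIsCoprime c hc).isUnit) (d : ZMod N) e
  rw [card] at hGauss
  refine (congrArg norm ?_).trans hGauss
  rw [← sum_range_natCast]
  refine sum_congr rfl fun l _ => ?_
  rw [← stdAddChar_coe]
  push_cast
  rfl

end ZMod

theorem Sf_bound_general (A B C : ℤ) (q₀ : ℕ) (r n m : ℤ)
    (hodd : Odd q₀)
    (hr : Int.gcd r (q₀ : ℤ) = 1) (hC : Int.gcd C (q₀ : ℤ) = 1) :
    ‖Sf A B C q₀ r n m‖ ≤ (q₀ : ℝ) ^ (-(1 / 2 : ℝ)) := by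
  have hq : (0 : ℝ) < q₀ := by exact_mod_cast hodd.pos
  have hrC : IsCoprime (r * C) (q₀ : ℤ) :=
    (Int.isCoprime_iff_gcd_eq_one.mpr hr).mul_left (Int.isCoprime_iff_gcd_eq_one.mpr hC)
  have hphase : ∀ k l : ℕ,
      r * (A * (k : ℤ) ^ 2 + 2 * B * k * l + C * (l : ℤ) ^ 2) + n * k + m * l =
        r * C * (l : ℤ) ^ 2 + (2 * r * B * k + m) * l + (r * A * k ^ 2 + n * k) := fun k l => by
    ring
  calc ‖Sf A B C q₀ r n m‖
      ≤ ((q₀ : ℝ) ^ 2)⁻¹ * ∑ _k ∈ range q₀, √q₀ := by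
        rw [Sf, norm_mul, norm_inv, norm_pow, norm_natCast]
        simp only [hphase]
        gcongr
        exact norm_sum_le_of_le _ fun _ _ => (ZMod.norm_sum_range_exp_quadratic hodd hrC _ _).le
    _ = (q₀ : ℝ) ^ (-(1 / 2 : ℝ)) := by
        rw [sum_const, card_range, nsmul_eq_mul, Real.rpow_neg hq.le, ← Real.sqrt_eq_rpow]
        field_simp
        rw [Real.sq_sqrt hq.le]

theorem Sf_bound (A B C a : ℤ) (q₀ : ℕ) (r n m : ℤ)
    (hq : 1 ≤ q₀) (hodd : Odd q₀)
    (hr : Int.gcd r (q₀ : ℤ) = 1) (hC : Int.gcd C (q₀ : ℤ) = 1)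
    (hdisc : A * C - B ^ 2 = a ^ 2) (ha : a ≠ 0) :
    ‖Sf A B C q₀ r n m‖ ≤ (q₀ : ℝ) ^ (-(1 / 2 : ℝ)) :=
  Sf_bound_general A B C q₀ r n m hodd hr hC
end

section
/- Let (A,B,C) be integers with gcd(A,B,C) = 1 and let d | AC - B². Then there exist integers k, ℓ with gcd(k,ℓ,d) = 1 such that for all integers m, n: if Am² + 2Bmn + Cn² ≡ 0 (mod d), then (mk + nℓ)² ≡ 0 (mod d). -/
/-!
Write `Q(x, y) = A x² + 2 B x y + C y²`. The polarization identity
`(m (A x + B y) + n (B x + C y))² = Q(x, y) Q(m, n) - (A C - B²) (x n - y m)²`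
shows that `k = A x + B y`, `ℓ = B x + C y` work as soon as `Q(x, y)` is coprime to `d`,
since `k x + ℓ y = Q(x, y)`. Such a value is `Q(1, y)` with `y` the product of the primes of `d`
not dividing `A`: at a prime `p ∣ d` with `p ∤ A` it is `≡ A`, and at one with `p ∣ A`
the discriminant forces `p ∣ B`, primitivity `p ∤ C`, so it is `≡ C y² ≢ 0`.
-/

def binQuad {R : Type*} [CommRing R] (A B C x y : R) : R :=
  A * x ^ 2 + 2 * B * x * y + C * y ^ 2

theorem sq_add_eq_binQuad_mul_binQuad_sub {R : Type*} [CommRing R] (A B C x y m n : R) :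
    (m * (A * x + B * y) + n * (B * x + C * y)) ^ 2 =
      binQuad A B C x y * binQuad A B C m n - (A * C - B ^ 2) * (x * n - y * m) ^ 2 := by
  unfold binQuad
  ring

theorem Int.gcd_gcd_eq_one_of_gcd_binQuad_eq_one {A B C x y d : ℤ}
    (h : Int.gcd (binQuad A B C x y) d = 1) :
    Int.gcd (A * x + B * y) (Int.gcd (B * x + C * y) d) = 1 := by
  set G := Int.gcd (A * x + B * y) (Int.gcd (B * x + C * y) d)
  have hGk : (G : ℤ) ∣ A * x + B * y := Int.gcd_dvd_left _ _
  have hGl : (G : ℤ) ∣ B * x + C * y := (Int.gcd_dvd_right _ _).trans (Int.gcd_dvd_left _ _)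
  have hGd : (G : ℤ) ∣ d := (Int.gcd_dvd_right _ _).trans (Int.gcd_dvd_right _ _)
  have hGQ : (G : ℤ) ∣ binQuad A B C x y := by
    have : (A * x + B * y) * x + (B * x + C * y) * y = binQuad A B C x y := by
      unfold binQuad; ring
    exact this ▸ dvd_add (hGk.mul_right x) (hGl.mul_right y)
  have : (G : ℤ) ∣ (1 : ℕ) := h ▸ Int.dvd_coe_gcd hGQ hGd
  exact Nat.dvd_one.mp (Int.natCast_dvd_natCast.mp this)

theorem Prime.not_dvd_of_gcd_gcd_eq_one {p A B C : ℤ} (hp : Prime p)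
    (hprim : Int.gcd A (Int.gcd B C) = 1) (hA : p ∣ A) (hB : p ∣ B) : ¬ p ∣ C := by
  intro hC
  have : p ∣ (1 : ℕ) := hprim ▸ Int.dvd_coe_gcd hA (Int.dvd_coe_gcd hB hC)
  exact hp.not_isUnit (isUnit_of_dvd_one this)

theorem Prime.not_dvd_binQuad_one {p A B C y : ℤ} (hp : Prime p)
    (hprim : Int.gcd A (Int.gcd B C) = 1) (hdisc : p ∣ A * C - B ^ 2)
    (hy : p ∣ y ↔ ¬ p ∣ A) : ¬ p ∣ binQuad A B C 1 y := by
  intro hQ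
  by_cases hA : p ∣ A
  · have hB : p ∣ B := by
      refine hp.dvd_of_dvd_pow (n := 2) ?_
      simpa using dvd_sub (hA.mul_right C) hdisc
    have hCy : p ∣ C * y ^ 2 := by
      have : C * y ^ 2 = binQuad A B C 1 y - A - 2 * B * y := by unfold binQuad; ring
      exact this ▸ dvd_sub (dvd_sub hQ hA) ((hB.mul_left 2).mul_right y)
    rcases hp.dvd_mul.mp hCy with hC | hy2
    · exact hp.not_dvd_of_gcd_gcd_eq_one hprim hA hB hC
    · exact hy.mp (hp.dvd_of_dvd_pow hy2) hA
  · have : A = binQuad A B C 1 y - y * (2 * B + C * y) := by unfold binQuad; ring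
    exact hA (this ▸ dvd_sub hQ ((hy.mpr hA).mul_right _))

theorem Nat.exists_forall_prime_dvd_iff {n : ℕ} (hn : n ≠ 0) (P : ℕ → Prop) [DecidablePred P] :
    ∃ y : ℕ, ∀ p, p.Prime → p ∣ n → (p ∣ y ↔ P p) := by
  refine ⟨∏ q ∈ n.primeFactors.filter P, q, fun p hp hpn => ?_⟩
  rw [hp.prime.dvd_finsetProd_iff]
  constructor
  · rintro ⟨q, hq, hpq⟩
    rw [Finset.mem_filter, Nat.mem_primeFactors] at hq
    exact (Nat.prime_dvd_prime_iff_eq hp hq.1.1).mp hpq ▸ hq.2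
  · exact fun hP => ⟨p, Finset.mem_filter.mpr ⟨Nat.mem_primeFactors.mpr ⟨hp, hpn, hn⟩, hP⟩, dvd_rfl⟩

theorem Int.exists_gcd_binQuad_eq_one {A B C d : ℤ} (hprim : Int.gcd A (Int.gcd B C) = 1)
    (hd : d ≠ 0) (hdisc : d ∣ A * C - B ^ 2) :
    ∃ x y : ℤ, Int.gcd (binQuad A B C x y) d = 1 := by
  classical
  obtain ⟨y, hy⟩ := Nat.exists_forall_prime_dvd_iff (Int.natAbs_ne_zero.mpr hd)
    (fun p => ¬ (p : ℤ) ∣ A)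
  refine ⟨1, y, Nat.coprime_of_dvd fun p hp hpQ hpd => ?_⟩
  rw [← Int.natCast_dvd] at hpQ hpd
  refine (Nat.prime_iff_prime_int.mp hp).not_dvd_binQuad_one hprim (hpd.trans hdisc) ?_ hpQ
  rw [Int.natCast_dvd_natCast]
  exact hy p hp (Int.natCast_dvd.mp hpd)

theorem linear_form_captures_quadratic_zeros (A B C : ℤ)
    (hprim : Int.gcd A (Int.gcd B C) = 1) (d : ℤ) (hd : 0 < d)
    (hdvd : d ∣ A * C - B ^ 2) :
    ∃ k ℓ : ℤ, Int.gcd k (Int.gcd ℓ d) = 1 ∧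
      ∀ m n : ℤ, d ∣ A * m ^ 2 + 2 * B * m * n + C * n ^ 2 →
        d ∣ (m * k + n * ℓ) ^ 2 := by
  obtain ⟨x, y, hcop⟩ := Int.exists_gcd_binQuad_eq_one hprim hd.ne' hdvd
  refine ⟨A * x + B * y, B * x + C * y, Int.gcd_gcd_eq_one_of_gcd_binQuad_eq_one hcop,
    fun m n hQ => ?_⟩
  rw [sq_add_eq_binQuad_mul_binQuad_sub]
  exact dvd_sub (dvd_mul_of_dvd_right hQ _) (dvd_mul_of_dvd_left hdvd _)
end

section
/- Let M be large, gcd(A,B,C) = 1, and d | AC - B². Then for any ε > 0, #{(m,n) : 1 ≤ m,n ≤ M, Am² + 2Bmn + Cn² ≡ 0 (mod d)} ≪_ε d^ε (M²/d^{1/2} + M). -/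
open Finset

/-!
At a prime power `p ^ e ∥ d` one of `A`, `C` is prime to `p`, say `A`, and the identity
`A Q(m, n) = (A m + B n)² + (A C - B²) n²` shows that `p ^ e ∣ Q(m, n)` forces
`p ^ ⌈e/2⌉ ∣ A m + B n`. Gluing the primes by the Chinese remainder theorem, the zeros of `Q`
modulo `d` lie on a line `a m + b n ≡ 0 (mod s)` with `gcd(a, b, s) = 1` and `s ≥ √d`. Such a line
meets `[1, M]²` in at most `M² / s + M` points: with `t = gcd(b, s)`, the first coordinate is a
multiple of `t` and determines the second modulo `s / t`. Hence the count is at most `M² / √d + M`.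
-/

theorem pow_dvd_of_pow_dvd_sq {α : Type*} [CommMonoidWithZero α] [IsCancelMulZero α] {p x : α}
    (hp : Prime p) {e : ℕ} (h : p ^ e ∣ x ^ 2) : p ^ ((e + 1) / 2) ∣ x := by
  rw [pow_dvd_iff_le_emultiplicity, emultiplicity_pow hp] at h
  rw [pow_dvd_iff_le_emultiplicity]
  generalize emultiplicity p x = v at h ⊢
  cases v using ENat.recTopCoe with
  | top => exact le_top
  | coe k => norm_cast at h ⊢; omega

theorem Int.exists_modEq_and_modEq {s₁ s₂ : ℤ} (h : IsCoprime s₁ s₂) (a₁ a₂ : ℤ) :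
    ∃ a, a ≡ a₁ [ZMOD s₁] ∧ a ≡ a₂ [ZMOD s₂] := by
  obtain ⟨u, v, huv⟩ := h
  refine ⟨a₁ * v * s₂ + a₂ * u * s₁, Int.modEq_iff_dvd.2 ⟨u * (a₁ - a₂), ?_⟩,
    Int.modEq_iff_dvd.2 ⟨v * (a₂ - a₁), ?_⟩⟩
  · linear_combination (-a₁) * huv
  · linear_combination (-a₂) * huv

theorem eq_one_of_dvd_of_coprime_gcd {a b : ℤ} {s g : ℕ} (h : Nat.Coprime (Int.gcd a b) s)
    (ha : (g : ℤ) ∣ a) (hb : (g : ℤ) ∣ b) (hs : g ∣ s) : g = 1 :=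
  Nat.eq_one_of_dvd_one (h ▸ Nat.dvd_gcd (Int.dvd_gcd ha hb) hs)

theorem coprime_gcd_pow_of_not_dvd {p : ℕ} (hp : p.Prime) {a : ℤ} (ha : ¬(p : ℤ) ∣ a) (b : ℤ)
    (f : ℕ) : Nat.Coprime (Int.gcd a b) (p ^ f) :=
  Nat.Coprime.pow_right f (hp.coprime_iff_not_dvd.2 fun h =>
    ha ((Int.natCast_dvd_natCast.2 h).trans (Int.gcd_dvd_left a b))).symm

theorem pow_dvd_linear_of_pow_dvd_quadratic {R : Type*} [CommRing R] [IsDomain R] {p : R}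
    (hp : Prime p) {e : ℕ} {A B C m n : R} (hdisc : p ^ e ∣ A * C - B ^ 2)
    (hQ : p ^ e ∣ A * m ^ 2 + 2 * B * m * n + C * n ^ 2) :
    p ^ ((e + 1) / 2) ∣ A * m + B * n := by
  refine pow_dvd_of_pow_dvd_sq hp ?_
  have hsq : (A * m + B * n) ^ 2 =
      A * (A * m ^ 2 + 2 * B * m * n + C * n ^ 2) - (A * C - B ^ 2) * n ^ 2 := by
    ring
  rw [hsq]
  exact dvd_sub (hQ.mul_left A) (hdisc.mul_right _)

structure ZerosOnLine (A B C : ℤ) (d s : ℕ) (a b : ℤ) : Prop where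
  coprime : Nat.Coprime (Int.gcd a b) s
  dvd_linear :
    ∀ m n : ℤ, (d : ℤ) ∣ A * m ^ 2 + 2 * B * m * n + C * n ^ 2 → (s : ℤ) ∣ a * m + b * n

namespace ZerosOnLine

variable {A B C : ℤ} {d s : ℕ} {a b : ℤ}

theorem one (A B C : ℤ) (d : ℕ) : ZerosOnLine A B C d 1 1 0 :=
  ⟨Nat.coprime_one_right _, fun _ _ _ => by simp⟩

theorem of_dvd {d' : ℕ} (h : ZerosOnLine A B C d s a b) (hd : d ∣ d') :
    ZerosOnLine A B C d' s a b :=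
  ⟨h.coprime, fun m n hQ => h.dvd_linear m n ((Int.natCast_dvd_natCast.2 hd).trans hQ)⟩

theorem of_modEq {a' b' : ℤ} (h : ZerosOnLine A B C d s a' b') (ha : a ≡ a' [ZMOD s])
    (hb : b ≡ b' [ZMOD s]) : ZerosOnLine A B C d s a b := by
  refine ⟨?_, fun m n hQ => ?_⟩
  · have hgs : Nat.gcd (Int.gcd a b) s ∣ s := Nat.gcd_dvd_right _ _
    have hgab : (Nat.gcd (Int.gcd a b) s : ℤ) ∣ Int.gcd a b :=
      Int.natCast_dvd_natCast.2 (Nat.gcd_dvd_left _ _)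
    have hmod {x x' : ℤ} (hx : x ≡ x' [ZMOD s]) :=
      (hx.of_dvd (Int.natCast_dvd_natCast.2 hgs)).dvd_iff
    exact eq_one_of_dvd_of_coprime_gcd h.coprime
      ((hmod ha).1 (hgab.trans (Int.gcd_dvd_left a b)))
      ((hmod hb).1 (hgab.trans (Int.gcd_dvd_right a b))) hgs
  · exact (((ha.mul_right m).add (hb.mul_right n)).dvd_iff).2 (h.dvd_linear m n hQ)

theorem mul {s₁ s₂ : ℕ} (h₁ : ZerosOnLine A B C d s₁ a b) (h₂ : ZerosOnLine A B C d s₂ a b)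
    (hs : Nat.Coprime s₁ s₂) : ZerosOnLine A B C d (s₁ * s₂) a b := by
  refine ⟨h₁.coprime.mul_right h₂.coprime, fun m n hQ => ?_⟩
  push_cast
  exact (Nat.isCoprime_iff_coprime.2 hs).mul_dvd (h₁.dvd_linear m n hQ) (h₂.dvd_linear m n hQ)

theorem exists_mul {d₁ d₂ s₁ s₂ : ℕ} {a₁ b₁ a₂ b₂ : ℤ}
    (h₁ : ZerosOnLine A B C d₁ s₁ a₁ b₁) (h₂ : ZerosOnLine A B C d₂ s₂ a₂ b₂)
    (hs : Nat.Coprime s₁ s₂) :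
    ∃ a b, ZerosOnLine A B C (d₁ * d₂) (s₁ * s₂) a b := by
  have hs' : IsCoprime (s₁ : ℤ) s₂ := Nat.isCoprime_iff_coprime.2 hs
  obtain ⟨a, ha₁, ha₂⟩ := Int.exists_modEq_and_modEq hs' a₁ a₂
  obtain ⟨b, hb₁, hb₂⟩ := Int.exists_modEq_and_modEq hs' b₁ b₂
  exact ⟨a, b, ((h₁.of_dvd (dvd_mul_right d₁ d₂)).of_modEq ha₁ hb₁).mul
    ((h₂.of_dvd (dvd_mul_left d₂ d₁)).of_modEq ha₂ hb₂) hs⟩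

theorem exists_prime_pow (hABC : Int.gcd A (Int.gcd B C) = 1) {p e : ℕ} (hp : p.Prime)
    (he : 0 < e) (hdisc : (p : ℤ) ^ e ∣ A * C - B ^ 2) :
    ∃ a b, ZerosOnLine A B C (p ^ e) (p ^ ((e + 1) / 2)) a b := by
  have hp' : Prime (p : ℤ) := Nat.prime_iff_prime_int.mp hp
  by_cases hA : (p : ℤ) ∣ A
  · have hC : ¬(p : ℤ) ∣ C := by
      intro hC
      have hB : (p : ℤ) ∣ B := hp'.dvd_of_dvd_pow (n := 2) <| by
        rw [show B ^ 2 = A * C - (A * C - B ^ 2) by ring]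
        exact dvd_sub (hA.mul_right C) ((dvd_pow_self _ he.ne').trans hdisc)
      have hABC' := Int.dvd_coe_gcd hA (Int.dvd_coe_gcd hB hC)
      rw [hABC] at hABC'
      exact hp'.not_dvd_one hABC'
    refine ⟨B, C, ⟨?_, fun m n hQ => ?_⟩⟩
    · rw [Int.gcd_comm]
      exact coprime_gcd_pow_of_not_dvd hp hC B _
    · push_cast at hQ ⊢
      have hQ' : (p : ℤ) ^ e ∣ C * n ^ 2 + 2 * B * n * m + A * m ^ 2 := by
        convert hQ using 1
        ring
      rw [show B * m + C * n = C * n + B * m by ring]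
      exact pow_dvd_linear_of_pow_dvd_quadratic hp' (by rwa [mul_comm]) hQ'
  · refine ⟨A, B, coprime_gcd_pow_of_not_dvd hp hA B _, fun m n hQ => ?_⟩
    push_cast at hQ ⊢
    exact pow_dvd_linear_of_pow_dvd_quadratic hp' hdisc hQ

end ZerosOnLine

theorem exists_zerosOnLine {A B C : ℤ} (hABC : Int.gcd A (Int.gcd B C) = 1) (d : ℕ)
    (hdisc : (d : ℤ) ∣ A * C - B ^ 2) :
    ∃ s a b, s ∣ d ∧ d ≤ s ^ 2 ∧ ZerosOnLine A B C d s a b := by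
  induction d using Nat.recOnPosPrimePosCoprime with
  | zero => exact ⟨1, 1, 0, one_dvd _, Nat.zero_le _, .one A B C 0⟩
  | one => exact ⟨1, 1, 0, one_dvd _, le_rfl, .one A B C 1⟩
  | prime_pow p e hp he =>
    obtain ⟨a, b, h⟩ := ZerosOnLine.exists_prime_pow hABC hp he (by exact_mod_cast hdisc)
    refine ⟨p ^ ((e + 1) / 2), a, b, pow_dvd_pow p (by omega), ?_, h⟩
    rw [← pow_mul]
    exact Nat.pow_le_pow_right hp.pos (by omega)
  | coprime d₁ d₂ _ _ hd ih₁ ih₂ =>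
    obtain ⟨s₁, a₁, b₁, hs₁, hd₁, h₁⟩ :=
      ih₁ ((Int.natCast_dvd_natCast.2 (dvd_mul_right d₁ d₂)).trans hdisc)
    obtain ⟨s₂, a₂, b₂, hs₂, hd₂, h₂⟩ :=
      ih₂ ((Int.natCast_dvd_natCast.2 (dvd_mul_left d₂ d₁)).trans hdisc)
    obtain ⟨a, b, h⟩ :=
      h₁.exists_mul h₂ (Nat.Coprime.coprime_dvd_right hs₂ (Nat.Coprime.coprime_dvd_left hs₁ hd))
    exact ⟨s₁ * s₂, a, b, mul_dvd_mul hs₁ hs₂, mul_pow s₁ s₂ 2 ▸ Nat.mul_le_mul hd₁ hd₂, h⟩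

theorem card_le_div_add_one_of_modEq {T : Finset ℕ} {M q : ℕ} (hT : ∀ n ∈ T, n ≤ M)
    (hmod : ∀ n ∈ T, ∀ n' ∈ T, n ≡ n' [MOD q]) : #T ≤ M / q + 1 := by
  calc #T ≤ #(range (M / q + 1)) := by
        refine card_le_card_of_injOn (· / q) (fun n hn => ?_) (fun n hn n' hn' h => ?_)
        · simpa [Nat.lt_succ_iff] using Nat.div_le_div_right (c := q) (hT n hn)
        · rw [← Nat.div_add_mod n q, ← Nat.div_add_mod n' q, show n / q = n' / q from h,
            show n % q = n' % q from hmod n hn n' hn']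
    _ = M / q + 1 := card_range _

theorem card_le_of_dvd_fst_of_modEq_snd {L : Finset (ℕ × ℕ)} {M t q : ℕ}
    (hL : L ⊆ Icc 1 M ×ˢ Icc 1 M) (hfst : ∀ x ∈ L, t ∣ x.1)
    (hsnd : ∀ x ∈ L, ∀ y ∈ L, x.1 = y.1 → x.2 ≡ y.2 [MOD q]) : #L ≤ M / t * (M / q + 1) := by
  have hfiber : ∀ m ∈ L.image Prod.fst, #{x ∈ L | x.1 = m} ≤ M / q + 1 := by
    intro m _
    rw [← card_image_of_injOn (f := Prod.snd) fun x hx y hy h =>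
      Prod.ext ((mem_filter.1 hx).2.trans (mem_filter.1 hy).2.symm) h]
    refine card_le_div_add_one_of_modEq ?_ ?_
    · simp only [mem_image, mem_filter]
      rintro _ ⟨x, ⟨hx, -⟩, rfl⟩
      exact (mem_Icc.1 (mem_product.1 (hL hx)).2).2
    · simp only [mem_image, mem_filter]
      rintro _ ⟨x, ⟨hx, rfl⟩, rfl⟩ _ ⟨y, ⟨hy, hxy⟩, rfl⟩
      exact hsnd x hx y hy hxy.symm
  have himage : L.image Prod.fst ⊆ {m ∈ Ioc 0 M | t ∣ m} := by
    simp only [subset_iff, mem_image, mem_filter, mem_Ioc]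
    rintro _ ⟨x, hx, rfl⟩
    have := mem_product.1 (hL hx)
    simp only [mem_Icc] at this
    exact ⟨⟨by omega, this.1.2⟩, hfst x hx⟩
  calc #L ≤ (M / q + 1) * #(L.image Prod.fst) := card_le_mul_card_image L _ hfiber
    _ ≤ (M / q + 1) * (M / t) := by
      gcongr
      exact (card_le_card himage).trans (Nat.Ioc_filter_dvd_card_eq_div M t).le
    _ = M / t * (M / q + 1) := mul_comm _ _

theorem dvd_of_dvd_linear {s : ℕ} {a b m n : ℤ} (hab : Nat.Coprime (Int.gcd a b) s)
    (h : (s : ℤ) ∣ a * m + b * n) : (Int.gcd s b : ℤ) ∣ m := by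
  have hcop : IsCoprime (Int.gcd s b : ℤ) a := by
    rw [Int.isCoprime_iff_gcd_eq_one]
    refine eq_one_of_dvd_of_coprime_gcd hab (Int.gcd_dvd_right _ _)
      ((Int.gcd_dvd_left _ _).trans (Int.gcd_dvd_right _ _)) ?_
    exact Int.natCast_dvd_natCast.1 ((Int.gcd_dvd_left _ _).trans (Int.gcd_dvd_left _ _))
  refine hcop.dvd_of_dvd_mul_left ?_
  exact (dvd_add_left ((Int.gcd_dvd_right _ _).mul_right n)).1 ((Int.gcd_dvd_left _ _).trans h)

theorem modEq_of_dvd_linear {s : ℕ} (hs : 0 < s) {a b m n n' : ℤ}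
    (h : (s : ℤ) ∣ a * m + b * n) (h' : (s : ℤ) ∣ a * m + b * n') : n ≡ n' [ZMOD s / Int.gcd s b] :=
  Int.ModEq.cancel_left_div_gcd (by exact_mod_cast hs) <| Int.ModEq.add_left_cancel' (a * m) <|
    (Int.modEq_zero_iff_dvd.2 h).trans (Int.modEq_zero_iff_dvd.2 h').symm

theorem card_filter_dvd_linear_le {s : ℕ} (hs : 0 < s) {a b : ℤ}
    (hab : Nat.Coprime (Int.gcd a b) s) (M : ℕ) :
    (#{x ∈ Icc 1 M ×ˢ Icc 1 M | (s : ℤ) ∣ a * x.1 + b * x.2} : ℝ) ≤ M ^ 2 / s + M := by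
  set t := Int.gcd s b
  have ht : t ∣ s := Int.natCast_dvd_natCast.1 (Int.gcd_dvd_left _ _)
  have ht0 : (0 : ℝ) < t := by exact_mod_cast Nat.pos_of_dvd_of_pos ht hs
  have hcard : #{x ∈ Icc 1 M ×ˢ Icc 1 M | (s : ℤ) ∣ a * x.1 + b * x.2} ≤
      M / t * (M / (s / t) + 1) :=
    card_le_of_dvd_fst_of_modEq_snd (filter_subset _ _)
    (fun x hx => Int.natCast_dvd_natCast.1 (dvd_of_dvd_linear hab (mem_filter.1 hx).2))
    (fun x hx y hy hxy => Int.natCast_modEq_iff.1 <| by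
      push_cast
      exact modEq_of_dvd_linear hs (mem_filter.1 hx).2 (hxy ▸ (mem_filter.1 hy).2))
  calc _ ≤ ((M / t * (M / (s / t) + 1) : ℕ) : ℝ) := by exact_mod_cast hcard
    _ ≤ M / t * (M / (s / t) + 1) := by
      push_cast
      gcongr
      · exact Nat.cast_div_le
      · rw [← Nat.cast_div ht ht0.ne']
        exact Nat.cast_div_le
    _ = M ^ 2 / s + M / t := by field_simp
    _ ≤ M ^ 2 / s + M := by
      gcongr
      exact div_le_self (Nat.cast_nonneg M) (by exact_mod_cast ht0)

theorem count_quadratic_zeros_mod_d (ε : ℝ) (hε : 0 < ε) :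
    ∃ K : ℝ, 0 < K ∧
      ∀ A B C : ℤ, Int.gcd A (Int.gcd B C) = 1 →
        ∀ d : ℕ, 0 < d → (d : ℤ) ∣ A * C - B ^ 2 →
          ∀ M : ℕ,
            ((((Finset.Icc 1 M) ×ˢ (Finset.Icc 1 M)).filter
                (fun p : ℕ × ℕ =>
                  (d : ℤ) ∣ A * (p.1 : ℤ) ^ 2 + 2 * B * p.1 * p.2 + C * (p.2 : ℤ) ^ 2)).card
                : ℝ)
              ≤ K * (d : ℝ) ^ ε * ((M : ℝ) ^ 2 / (d : ℝ) ^ ((1 : ℝ) / 2) + (M : ℝ)) := by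
  refine ⟨1, one_pos, fun A B C hABC d hd hdisc M => ?_⟩
  obtain ⟨s, a, b, hsd, hds, hline⟩ := exists_zerosOnLine hABC d hdisc
  have hsqrt : (d : ℝ) ^ ((1 : ℝ) / 2) ≤ s := by
    rw [← Real.sqrt_eq_rpow]
    exact Real.sqrt_le_iff.2 ⟨Nat.cast_nonneg s, by exact_mod_cast hds⟩
  calc _ ≤ (#{x ∈ Icc 1 M ×ˢ Icc 1 M | (s : ℤ) ∣ a * x.1 + b * x.2} : ℝ) := by
        refine Nat.cast_le.2 (card_le_card (monotone_filter_right _ fun x _ hQ => ?_))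
        exact hline.dvd_linear x.1 x.2 (by exact_mod_cast hQ)
    _ ≤ M ^ 2 / s + M :=
      card_filter_dvd_linear_le (Nat.pos_of_dvd_of_pos hsd hd) hline.coprime M
    _ ≤ M ^ 2 / (d : ℝ) ^ ((1 : ℝ) / 2) + M := by gcongr
    _ ≤ 1 * (d : ℝ) ^ ε * (M ^ 2 / (d : ℝ) ^ ((1 : ℝ) / 2) + M) := by
      rw [one_mul]
      exact le_mul_of_one_le_left (by positivity) (Real.one_le_rpow (Nat.one_le_cast.2 hd) hε.le)
end

section
/- Fix a nonzero integer a and a large integer z. The number of SL₂(ℤ)-equivalence classes of primitive integral binary quadratic forms of discriminant -4a² which represent z is ≪_ε z^ε · (z, 4a²)^{1/2} for any ε > 0. -/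
/-- Evaluation of the binary quadratic form `(A,B,C) ↦ Ax² + 2Bxy + Cy²`. -/
def evalBQF (f : ℤ × ℤ × ℤ) (x y : ℤ) : ℤ :=
  f.1 * x ^ 2 + 2 * f.2.1 * x * y + f.2.2 * y ^ 2

/-- `SL₂(ℤ)`-equivalence of binary quadratic forms. -/
def SL2Equiv (f g : ℤ × ℤ × ℤ) : Prop :=
  ∃ p q r s : ℤ, p * s - q * r = 1 ∧
    ∀ x y : ℤ, evalBQF g x y = evalBQF f (p * x + q * y) (r * x + s * y)

/-!
Every form representing `z` is `SL₂(ℤ)`-equivalent to a form `(A, B, C)` with `A ∣ z` and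
`0 ≤ B < A`. Since `B² - AC = -a²`, the class is then determined by `A` together with a root `B`
of `x² ≡ -a² (mod A)`. The roots `x` of `x² ≡ c (mod A)` fall into at most `τ(A)` groups
according to `gcd(x - x₀, A)` for a fixed root `x₀`, each of size at most `√gcd(A, 4c)`. Hence
there are at most `τ(z)² √gcd(z, 4a²)` classes, and `τ(z) ≪_ε z^ε`.
-/

open Finset

namespace SL2Equiv

variable {f g k : ℤ × ℤ × ℤ}

theorem trans (hfg : SL2Equiv f g) (hgk : SL2Equiv g k) : SL2Equiv f k := by
  obtain ⟨p, q, r, s, hdet, heq⟩ := hfg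
  obtain ⟨p', q', r', s', hdet', heq'⟩ := hgk
  refine ⟨p * p' + q * r', p * q' + q * s', r * p' + s * r', r * q' + s * s',
    by linear_combination (p' * s' - q' * r') * hdet + hdet', fun x y => ?_⟩
  rw [heq' x y, heq (p' * x + q' * y) (r' * x + s' * y)]
  simp only [evalBQF]
  ring

theorem symm (h : SL2Equiv f g) : SL2Equiv g f := by
  obtain ⟨p, q, r, s, hdet, heq⟩ := h
  refine ⟨s, -q, -r, p, by linarith, fun x y => ?_⟩
  rw [heq (s * x + -q * y) (-r * x + p * y)]
  simp only [evalBQF]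
  linear_combination
    (-(p * s - q * r + 1) * (f.1 * x ^ 2 + 2 * f.2.1 * x * y + f.2.2 * y ^ 2)) * hdet

theorem exists_coeff_eq (h : SL2Equiv f g) :
    ∃ p q r s : ℤ, p * s - q * r = 1 ∧
      g.1 = f.1 * p ^ 2 + 2 * f.2.1 * p * r + f.2.2 * r ^ 2 ∧
      g.2.1 = f.1 * p * q + f.2.1 * (p * s + q * r) + f.2.2 * r * s ∧
      g.2.2 = f.1 * q ^ 2 + 2 * f.2.1 * q * s + f.2.2 * s ^ 2 := by
  obtain ⟨p, q, r, s, hdet, heq⟩ := h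
  have h₁₀ := heq 1 0
  have h₀₁ := heq 0 1
  have h₁₁ := heq 1 1
  simp only [evalBQF] at h₁₀ h₀₁ h₁₁
  refine ⟨p, q, r, s, hdet, by linear_combination h₁₀, ?_, by linear_combination h₀₁⟩
  have : 2 * g.2.1 = 2 * (f.1 * p * q + f.2.1 * (p * s + q * r) + f.2.2 * r * s) := by
    linear_combination h₁₁ - h₁₀ - h₀₁
  omega

theorem disc_eq (h : SL2Equiv f g) :
    g.2.1 ^ 2 - g.1 * g.2.2 = f.2.1 ^ 2 - f.1 * f.2.2 := by
  obtain ⟨p, q, r, s, hdet, h₁, h₂, h₃⟩ := h.exists_coeff_eq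
  rw [h₁, h₂, h₃]
  linear_combination (f.2.1 ^ 2 - f.1 * f.2.2) * (p * s - q * r + 1) * hdet

theorem of_equiv_of_disc_eq {A B C C' : ℤ} (hA : A ≠ 0) (hf : SL2Equiv f (A, B, C))
    (hg : SL2Equiv g (A, B, C')) (hdisc : f.2.1 ^ 2 - f.1 * f.2.2 = g.2.1 ^ 2 - g.1 * g.2.2) :
    SL2Equiv f g := by
  have hC : C = C' := by
    have := hf.disc_eq.trans (hdisc.trans hg.disc_eq.symm)
    exact mul_left_cancel₀ hA (by linarith)
  subst hC
  exact hf.trans hg.symm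

end SL2Equiv

theorem evalBQF_mul_mul (f : ℤ × ℤ × ℤ) (d x y : ℤ) :
    evalBQF f (d * x) (d * y) = d ^ 2 * evalBQF f x y := by
  simp only [evalBQF]
  ring

theorem sl2Equiv_shear (A B C t : ℤ) :
    SL2Equiv (A, B, C) (A, B + A * t, C + 2 * B * t + A * t ^ 2) :=
  ⟨1, t, 0, 1, by ring, fun x y => by simp only [evalBQF]; ring⟩

theorem exists_sl2Equiv_fst_eq_evalBQF (f : ℤ × ℤ × ℤ) {m n : ℤ} (h : IsCoprime m n) :
    ∃ B C : ℤ, SL2Equiv f (evalBQF f m n, B, C) := by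
  obtain ⟨u, v, huv⟩ := h
  exact ⟨f.1 * m * -v + f.2.1 * (m * u + -v * n) + f.2.2 * n * u, evalBQF f (-v) u,
    m, -v, n, u, by linear_combination huv, fun x y => by simp only [evalBQF]; ring⟩

/-- Write `z = d² A` with `A` properly represented, move `A` to the first coefficient, then
reduce `B` modulo `A` by a shear. -/
theorem exists_sl2Equiv_reduced {f : ℤ × ℤ × ℤ} {z m n : ℤ} (hz : 0 < z)
    (hrep : evalBQF f m n = z) :
    ∃ (A : ℕ) (B C : ℤ), 0 < A ∧ (A : ℤ) ∣ z ∧ 0 ≤ B ∧ B < A ∧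
      SL2Equiv f (A, B, C) := by
  have hmn : 0 < Int.gcd m n := by
    refine Nat.pos_of_ne_zero fun h0 => ?_
    obtain ⟨rfl, rfl⟩ := Int.gcd_eq_zero_iff.mp h0
    simp [evalBQF] at hrep
    omega
  obtain ⟨d, m', n', -, hcop, rfl, rfl⟩ := Int.exists_gcd_one' hmn
  have hz_eq : z = (d : ℤ) ^ 2 * evalBQF f m' n' := by
    rw [← hrep, mul_comm m', mul_comm n', evalBQF_mul_mul]
  have hA : 0 < evalBQF f m' n' := pos_of_mul_pos_right (hz_eq ▸ hz) (sq_nonneg _)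
  obtain ⟨B, C, hB⟩ :=
    exists_sl2Equiv_fst_eq_evalBQF f (Int.isCoprime_iff_gcd_eq_one.mpr hcop)
  lift evalBQF f m' n' to ℕ using hA.le with A hAeq
  have hshear := hB.trans (sl2Equiv_shear A B C (-(B / A)))
  rw [mul_neg, ← sub_eq_add_neg, ← Int.emod_def] at hshear
  exact ⟨A, B % A, _, by exact_mod_cast hA, ⟨_, hz_eq.trans (mul_comm _ _)⟩,
    Int.emod_nonneg _ hA.ne', Int.emod_lt_of_pos _ hA, hshear⟩

noncomputable def sqrtsMod (n : ℕ) (c : ℤ) : Finset ℤ :=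
  {x ∈ Ico 0 (n : ℤ) | (n : ℤ) ∣ x ^ 2 - c}

theorem card_le_of_subset_Ico_of_modEq {s : Finset ℤ} {M L : ℕ} (hL : 0 < L)
    (hs : ∀ x ∈ s, 0 ≤ x ∧ x < M * L) (hmod : ∀ x ∈ s, ∀ y ∈ s, x ≡ y [ZMOD L]) :
    #s ≤ M := by
  have hL' : (0 : ℤ) < L := by exact_mod_cast hL
  calc #s ≤ #(Ico 0 (M : ℤ)) := by
        refine card_le_card_of_injOn (· / (L : ℤ)) (fun x hx => ?_) (fun x hx y hy hxy => ?_)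
        · obtain ⟨hx0, hxM⟩ := hs x hx
          exact mem_Ico.mpr ⟨Int.ediv_nonneg hx0 hL'.le, Int.ediv_lt_of_lt_mul hL' hxM⟩
        · rw [← Int.mul_ediv_add_emod x L, ← Int.mul_ediv_add_emod y L, hmod x hx y hy]
          simp only at hxy
          rw [hxy]
    _ = M := by simp

theorem natCast_div_gcd_dvd_add {n : ℕ} {x y : ℤ} (hn : n ≠ 0)
    (h : (n : ℤ) ∣ x ^ 2 - y ^ 2) :
    ((n / Int.gcd (x - y) n : ℕ) : ℤ) ∣ x + y := by
  have he : 0 < Int.gcd (x - y) n := Int.gcd_pos_of_ne_zero_right _ (by exact_mod_cast hn)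
  set e := Int.gcd (x - y) n
  have hcop : IsCoprime ((n : ℤ) / e) ((x - y) / e) := by
    rw [Int.isCoprime_iff_gcd_eq_one, Int.gcd_comm]
    exact Int.gcd_div_gcd_div_gcd he
  rw [Int.natCast_div]
  refine hcop.dvd_of_dvd_mul_left ((mul_dvd_mul_iff_left (a := (e : ℤ)) (by positivity)).mp ?_)
  rwa [Int.mul_ediv_cancel' (Int.gcd_dvd_right _ _), ← mul_assoc,
    Int.mul_ediv_cancel' (Int.gcd_dvd_left _ _), mul_comm, ← sq_sub_sq]

theorem sq_gcd_dvd_four_mul {e n' : ℕ} {x y c : ℤ} (hx : ((e * n' : ℕ) : ℤ) ∣ x ^ 2 - c)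
    (he : (e : ℤ) ∣ x - y) (hn' : (n' : ℤ) ∣ x + y) :
    ((Nat.gcd e n' : ℕ) : ℤ) ^ 2 ∣ 4 * c := by
  set M : ℤ := ((Nat.gcd e n' : ℕ) : ℤ)
  have hMe : M ∣ e := Int.natCast_dvd_natCast.mpr (Nat.gcd_dvd_left _ _)
  have hMn' : M ∣ n' := Int.natCast_dvd_natCast.mpr (Nat.gcd_dvd_right _ _)
  have h2x : M ∣ 2 * x := by
    have := dvd_add (hMe.trans he) (hMn'.trans hn')
    rwa [show x - y + (x + y) = 2 * x by ring] at this
  have hsq : M ^ 2 ∣ x ^ 2 - c := by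
    refine dvd_trans ?_ hx
    rw [sq]
    push_cast
    exact mul_dvd_mul hMe hMn'
  have := dvd_sub (pow_dvd_pow_of_dvd h2x 2) (hsq.mul_left 4)
  rwa [show (2 * x) ^ 2 - 4 * (x ^ 2 - c) = 4 * c by ring] at this

/-- The solutions `x` with `gcd (x - x₀, n) = e` satisfy `x ≡ x₀ (mod e)` and
`x ≡ -x₀ (mod n / e)`, so they lie in one class modulo `L = lcm (e, n / e)`; and
`n / L = gcd (e, n / e)` has square dividing `4c`. -/
theorem card_filter_gcd_sub_eq_le {n e : ℕ} {c x₀ : ℤ} (hx₀ : (n : ℤ) ∣ x₀ ^ 2 - c) :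
    #{x ∈ sqrtsMod n c | Int.gcd (x - x₀) n = e} ≤ Nat.sqrt (Int.gcd n (4 * c)) := by
  set s := {x ∈ sqrtsMod n c | Int.gcd (x - x₀) n = e}
  obtain hs | ⟨x₁, hx₁⟩ := s.eq_empty_or_nonempty
  · simp [hs]
  have mem : ∀ x ∈ s,
      (0 ≤ x ∧ x < n) ∧ (n : ℤ) ∣ x ^ 2 - c ∧ Int.gcd (x - x₀) n = e := by
    intro x hx
    simpa [s, sqrtsMod, and_assoc] using hx
  have hn : n ≠ 0 := by
    obtain ⟨⟨h0, hlt⟩, -⟩ := mem x₁ hx₁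
    omega
  have hen : e * (n / e) = n := by
    refine Nat.mul_div_cancel' (Int.natCast_dvd_natCast.mp ?_)
    exact (mem x₁ hx₁).2.2 ▸ Int.gcd_dvd_right _ _
  have hdvd : ∀ x ∈ s, (e : ℤ) ∣ x - x₀ ∧ ((n / e : ℕ) : ℤ) ∣ x + x₀ := by
    intro x hx
    obtain ⟨-, hxc, he⟩ := mem x hx
    refine ⟨he ▸ Int.gcd_dvd_left _ _, he ▸ natCast_div_gcd_dvd_add hn ?_⟩
    simpa using dvd_sub hxc hx₀
  set M := Nat.gcd e (n / e)
  set L := Nat.lcm e (n / e)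
  have hML : M * L = n := by rw [Nat.gcd_mul_lcm, hen]
  have hM : M ^ 2 ∣ Int.gcd n (4 * c) := by
    obtain ⟨-, hx₁c, -⟩ := mem x₁ hx₁
    have hMn : (M : ℤ) ^ 2 ∣ n := by
      rw [← hen, sq]
      exact_mod_cast Nat.mul_dvd_mul (Nat.gcd_dvd_left e (n / e)) (Nat.gcd_dvd_right e (n / e))
    have h4c := sq_gcd_dvd_four_mul (by rwa [hen]) (hdvd x₁ hx₁).1 (hdvd x₁ hx₁).2
    exact_mod_cast Int.dvd_coe_gcd hMn h4c
  have hL : 0 < L := Nat.pos_of_ne_zero (right_ne_zero_of_mul (hML ▸ hn))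
  calc #s ≤ M := by
        refine card_le_of_subset_Ico_of_modEq hL (fun x hx => ?_) (fun x hx y hy => ?_)
        · exact_mod_cast hML ▸ (mem x hx).1
        · refine Int.modEq_iff_dvd.mpr (Int.natCast_dvd.mpr (Nat.lcm_dvd ?_ ?_))
          · have := dvd_sub (hdvd y hy).1 (hdvd x hx).1
            exact Int.natCast_dvd.mp (by simpa using this)
          · have := dvd_sub (hdvd y hy).2 (hdvd x hx).2
            exact Int.natCast_dvd.mp (by simpa using this)
    _ ≤ Nat.sqrt (Int.gcd n (4 * c)) :=
        Nat.le_sqrt'.mpr (Nat.le_of_dvd (Int.gcd_pos_of_ne_zero_left _ (by exact_mod_cast hn)) hM)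

theorem card_sqrtsMod_le (n : ℕ) (c : ℤ) :
    #(sqrtsMod n c) ≤ #n.divisors * Nat.sqrt (Int.gcd n (4 * c)) := by
  obtain hs | ⟨x₀, hx₀⟩ := (sqrtsMod n c).eq_empty_or_nonempty
  · simp [hs]
  obtain ⟨hx₀n, hx₀c⟩ := mem_filter.mp hx₀
  have hn : n ≠ 0 := by
    have := mem_Ico.mp hx₀n
    omega
  have hmaps : Set.MapsTo (fun x => Int.gcd (x - x₀) n) (sqrtsMod n c) n.divisors :=
    fun x _ => Nat.mem_divisors.mpr ⟨Int.natCast_dvd_natCast.mp (Int.gcd_dvd_right _ _), hn⟩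
  rw [card_eq_sum_card_fiberwise hmaps, ← smul_eq_mul]
  exact sum_le_card_nsmul _ _ _ fun e _ => card_filter_gcd_sub_eq_le hx₀c

theorem card_quot_sl2Equiv_le_card_sigma {P : ℤ × ℤ × ℤ → Prop} {Δ z : ℤ} (hz : 0 < z)
    (hP : ∀ f, P f → f.2.1 ^ 2 - f.1 * f.2.2 = Δ ∧ ∃ m n, evalBQF f m n = z) :
    Nat.card (Quot fun f g : {f // P f} => SL2Equiv f.1 g.1) ≤
      #(z.natAbs.divisors.sigma fun A => sqrtsMod A Δ) := by
  have key : ∀ f : {f // P f}, ∃ R ∈ z.natAbs.divisors.sigma (fun A => sqrtsMod A Δ),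
      ∃ C, SL2Equiv f.1 ((R.1 : ℤ), R.2, C) := by
    rintro ⟨f, hf⟩
    obtain ⟨hdisc, m, n, hrep⟩ := hP f hf
    obtain ⟨A, B, C, hA, hAz, hB0, hBA, hfR⟩ := exists_sl2Equiv_reduced hz hrep
    have hR := hfR.disc_eq
    simp only at hR
    refine ⟨⟨A, B⟩, mem_sigma.mpr ⟨?_, ?_⟩, C, hfR⟩
    · exact Nat.mem_divisors.mpr ⟨Int.natCast_dvd.mp hAz, by omega⟩
    · exact mem_filter.mpr ⟨mem_Ico.mpr ⟨hB0, hBA⟩, ⟨C, by linarith⟩⟩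
  choose R hR hC using key
  refine (Nat.card_le_card_of_injective (fun q => (⟨R q.out, hR _⟩ : {x // x ∈ _}))
    fun q₁ q₂ h => ?_).trans (Nat.card_eq_finsetCard _).le
  obtain ⟨C₁, h₁⟩ := hC q₁.out
  obtain ⟨C₂, h₂⟩ := hC q₂.out
  have hA : ((R q₂.out).1 : ℤ) ≠ 0 := by
    have := Nat.pos_of_mem_divisors (mem_sigma.mp (hR q₂.out)).1
    omega
  rw [show R q₁.out = R q₂.out from congrArg Subtype.val h] at h₁
  rw [← q₁.out_eq, ← q₂.out_eq]
  exact Quot.sound (h₁.of_equiv_of_disc_eq hA h₂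
    ((hP _ q₁.out.2).1.trans (hP _ q₂.out.2).1.symm))

theorem card_sigma_sqrtsMod_le (z : ℕ) (c : ℤ) :
    #(z.divisors.sigma fun A => sqrtsMod A c) ≤
      #z.divisors * (#z.divisors * Nat.sqrt (Int.gcd z (4 * c))) := by
  rw [card_sigma, ← smul_eq_mul]
  refine sum_le_card_nsmul _ _ _ fun A hA => (card_sqrtsMod_le A c).trans ?_
  obtain ⟨hAz, hz⟩ := Nat.mem_divisors.mp hA
  refine Nat.mul_le_mul (card_le_card (Nat.divisors_subset_of_dvd hz hAz)) (Nat.sqrt_le_sqrt ?_)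
  exact Nat.le_of_dvd (Int.gcd_pos_of_ne_zero_left _ (by exact_mod_cast hz))
    (Int.gcd_dvd_gcd_of_dvd_left _ (Int.natCast_dvd_natCast.mpr hAz))

theorem exists_succ_le_mul_one_add_pow {x : ℝ} (hx : 0 < x) :
    ∃ C : ℝ, 1 ≤ C ∧ ∀ k : ℕ, (k + 1 : ℝ) ≤ C * (1 + x) ^ k := by
  refine ⟨max 1 x⁻¹, le_max_left _ _, fun k => ?_⟩
  have hCx : 1 ≤ max 1 x⁻¹ * x :=
    calc (1 : ℝ) = x⁻¹ * x := (inv_mul_cancel₀ hx.ne').symm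
      _ ≤ max 1 x⁻¹ * x := mul_le_mul_of_nonneg_right (le_max_right _ _) hx.le
  calc (k + 1 : ℝ) ≤ max 1 x⁻¹ * (1 + k * x) := by
        nlinarith [le_max_left 1 x⁻¹, mul_nonneg k.cast_nonneg (sub_nonneg.mpr hCx)]
    _ ≤ max 1 x⁻¹ * (1 + x) ^ k :=
        mul_le_mul_of_nonneg_left (one_add_mul_le_pow (by linarith) k) (by positivity)

theorem rpow_natCast_eq_prod_primeFactors {n : ℕ} (hn : n ≠ 0) (δ : ℝ) :
    (n : ℝ) ^ δ = ∏ p ∈ n.primeFactors, ((p : ℝ) ^ δ) ^ n.factorization p := by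
  conv_lhs => rw [← Nat.prod_factorization_pow_eq_self hn]
  rw [Finsupp.prod, Nat.support_factorization, Nat.cast_prod,
    ← Real.finsetProd_rpow _ _ fun _ _ => by positivity]
  refine prod_congr rfl fun p _ => ?_
  rw [Nat.cast_pow, Real.rpow_pow_comm (Nat.cast_nonneg p)]

/-- Each prime power `p^k ∥ n` contributes `k + 1 ≤ (p^δ)^k`
once `p^δ ≥ 2`, and `k + 1 ≤ C (2^δ)^k` for the finitely many smaller primes. -/
theorem exists_card_divisors_le_rpow {δ : ℝ} (hδ : 0 < δ) :
    ∃ K : ℝ, 0 < K ∧ ∀ n : ℕ, n ≠ 0 → (#n.divisors : ℝ) ≤ K * (n : ℝ) ^ δ := by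
  obtain ⟨C, hC1, hC⟩ := exists_succ_le_mul_one_add_pow
    (sub_pos.mpr (Real.one_lt_rpow (by norm_num : (1 : ℝ) < 2) hδ))
  rw [add_sub_cancel] at hC
  obtain ⟨N, hN⟩ := Filter.eventually_atTop.mp
    (((tendsto_rpow_atTop hδ).comp tendsto_natCast_atTop_atTop).eventually_ge_atTop 2)
  have hfactor : ∀ p k : ℕ, 2 ≤ p →
      (k + 1 : ℝ) ≤ (if p < N then C else 1) * ((p : ℝ) ^ δ) ^ k := by
    intro p k hp
    split_ifs with hpN
    · refine (hC k).trans ?_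
      gcongr
      exact_mod_cast hp
    · calc (k + 1 : ℝ) ≤ 2 ^ k := by exact_mod_cast Nat.lt_two_pow_self
        _ ≤ ((p : ℝ) ^ δ) ^ k := pow_le_pow_left₀ (by norm_num) (hN p (not_lt.mp hpN)) k
        _ = 1 * ((p : ℝ) ^ δ) ^ k := (one_mul _).symm
  have hprod : ∀ n : ℕ, ∏ p ∈ n.primeFactors, (if p < N then C else 1) ≤ C ^ N := by
    intro n
    rw [prod_ite, prod_const, prod_const, one_pow, mul_one]
    exact pow_le_pow_right₀ hC1
      ((card_le_card fun p hp => mem_range.mpr (mem_filter.mp hp).2).trans (card_range N).le)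
  refine ⟨C ^ N, by positivity, fun n hn => ?_⟩
  calc (#n.divisors : ℝ) = ∏ p ∈ n.primeFactors, ((n.factorization p : ℝ) + 1) := by
        rw [Nat.card_divisors hn]
        push_cast
        rfl
    _ ≤ ∏ p ∈ n.primeFactors,
          (if p < N then C else 1) * ((p : ℝ) ^ δ) ^ n.factorization p :=
        prod_le_prod (fun _ _ => by positivity)
          fun p hp => hfactor p _ (Nat.prime_of_mem_primeFactors hp).two_le
    _ ≤ C ^ N * (n : ℝ) ^ δ := by
        rw [prod_mul_distrib, ← rpow_natCast_eq_prod_primeFactors hn]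
        exact mul_le_mul_of_nonneg_right (hprod n) (by positivity)

theorem count_classes_representing (ε : ℝ) (hε : 0 < ε) :
    ∃ K : ℝ, 0 < K ∧
      ∀ a z : ℤ, a ≠ 0 → 0 < z →
        (Nat.card (Quot (fun f g : { f : ℤ × ℤ × ℤ //
            Int.gcd f.1 (Int.gcd f.2.1 f.2.2) = 1 ∧
            f.2.1 ^ 2 - f.1 * f.2.2 = -a ^ 2 ∧
            ∃ m n : ℤ, evalBQF f m n = z } => SL2Equiv f.1 g.1)) : ℝ)
          ≤ K * (z : ℝ) ^ ε * ((Int.gcd z (4 * a ^ 2) : ℝ)) ^ ((1 : ℝ) / 2) := by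
  obtain ⟨K, hK, hτ⟩ := exists_card_divisors_le_rpow (half_pos hε)
  refine ⟨K ^ 2, by positivity, fun a z _ hz => ?_⟩
  have hcount := card_sigma_sqrtsMod_le z.natAbs (-a ^ 2)
  rw [Int.natCast_natAbs, abs_of_pos hz, mul_neg, Int.gcd_neg] at hcount
  have hτz : (#z.natAbs.divisors : ℝ) ≤ K * (z : ℝ) ^ (ε / 2) := by
    simpa [abs_of_pos hz] using hτ z.natAbs (Int.natAbs_ne_zero.mpr hz.ne')
  have hsqrt : (Nat.sqrt (Int.gcd z (4 * a ^ 2)) : ℝ) ≤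
      (Int.gcd z (4 * a ^ 2) : ℝ) ^ ((1 : ℝ) / 2) := by
    rw [← Real.sqrt_eq_rpow]
    exact Real.nat_sqrt_le_real_sqrt
  have hzε : (z : ℝ) ^ (ε / 2) * (z : ℝ) ^ (ε / 2) = (z : ℝ) ^ ε := by
    rw [← Real.rpow_add (by exact_mod_cast hz), add_halves]
  refine (Nat.cast_le.mpr (le_trans (card_quot_sl2Equiv_le_card_sigma hz fun f hf => hf.2)
    hcount)).trans ?_
  push_cast
  calc _ ≤ (K * (z : ℝ) ^ (ε / 2)) * ((K * (z : ℝ) ^ (ε / 2)) *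
        (Int.gcd z (4 * a ^ 2) : ℝ) ^ ((1 : ℝ) / 2)) := by gcongr
    _ = _ := by rw [← hzε]; ring
end

section
/- Let p be a prime, e,f ≥ 0 integers. The number of residues B (mod p^e) with B² ≡ -p^{2f} (mod p^e) is at most 2·min(p^{e/2}, p^f) for odd p; more precisely it is at most p^{e/2} if 2f ≥ e, and at most 2·p^f if 2f < e. -/
lemma pow_dvd_of_pow_dvd_sq_s15 {p : ℕ} (hp : p.Prime) {a m k : ℕ}
    (hdvd : p ^ m ∣ a ^ 2) (hk : 2 * k ≤ m + 1) : p ^ k ∣ a := by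
  rcases eq_or_ne a 0 with rfl | ha
  · simp
  · have h2 : a ^ 2 ≠ 0 := pow_ne_zero _ ha
    rw [hp.pow_dvd_iff_le_factorization h2, Nat.factorization_pow, Finsupp.smul_apply,
      smul_eq_mul] at hdvd
    rw [hp.pow_dvd_iff_le_factorization ha]
    omega

lemma sqrt_neg_one_card {p : ℕ} (hp : p.Prime) (hodd : Odd p) (k : ℕ) :
    Nat.card {x : ZMod (p ^ k) // x ^ 2 = -1} ≤ 2 := by
  haveI : NeZero (p ^ k) := ⟨pow_ne_zero _ hp.ne_zero⟩
  haveI : Fact p.Prime := ⟨hp⟩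
  rcases Nat.eq_zero_or_pos k with rfl | hk
  · have h1 : Nat.card {x : ZMod (p ^ 0) // x ^ 2 = -1} ≤ Nat.card (ZMod (p ^ 0)) :=
      Nat.card_le_card_of_injective _ Subtype.val_injective
    simpa using h1.trans (by simp [Nat.card_eq_fintype_card])
  have key : ∀ x y : ZMod (p ^ k), x ^ 2 = -1 → y ^ 2 = -1 → x = y ∨ x = -y := by
    intro x y hx hy
    set r := ZMod.castHom (dvd_pow_self p hk.ne') (ZMod p) with hr
    have hunit : ∀ z : ZMod (p ^ k), r z ≠ 0 → IsUnit z := by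
      intro z hz
      have hzval : ¬ p ∣ z.val := by
        intro hdvd
        apply hz
        rw [ZMod.castHom_apply, ← ZMod.natCast_val]
        exact (ZMod.natCast_eq_zero_iff _ _).mpr hdvd
      have h1 : IsUnit ((z.val : ℕ) : ZMod (p ^ k)) := by
        rw [ZMod.isUnit_iff_coprime]
        exact ((hp.coprime_iff_not_dvd.mpr hzval).symm).pow_right _
      rwa [ZMod.natCast_val, ZMod.cast_id] at h1
    have hrx2 : r x * r x = -1 := by
      have : r (x ^ 2) = r (-1) := by rw [hx]
      simpa [pow_two] using this
    have hry2 : r y * r y = -1 := by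
      have : r (y ^ 2) = r (-1) := by rw [hy]
      simpa [pow_two] using this
    have hrx0 : r x ≠ 0 := by
      intro h; rw [h, mul_zero] at hrx2
      exact (neg_ne_zero.mpr one_ne_zero) hrx2.symm
    have hry0 : r y ≠ 0 := by
      intro h; rw [h, mul_zero] at hry2
      exact (neg_ne_zero.mpr one_ne_zero) hry2.symm
    have h2 : (2 : ZMod p) ≠ 0 := by
      intro hh
      have hdd : p ∣ 2 := (ZMod.natCast_eq_zero_iff 2 p).mp (by exact_mod_cast hh)
      have hp2 := (Nat.prime_dvd_prime_iff_eq hp Nat.prime_two).mp hdd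
      rw [hp2] at hodd
      exact absurd hodd (by decide)
    rcases mul_self_eq_mul_self_iff.mp (hrx2.trans hry2.symm) with hc | hc
    · left
      have hu : IsUnit (x + y) := by
        apply hunit
        rw [map_add, ← hc]
        intro h0
        have h3 : (2 : ZMod p) * r x = 0 := by linear_combination h0
        rcases mul_eq_zero.mp h3 with h | h
        exacts [h2 h, hrx0 h]
      have hz : (x + y) * (x - y) = (x + y) * 0 := by
        rw [mul_zero]; linear_combination hx - hy
      exact sub_eq_zero.mp (hu.mul_left_cancel hz)
    · right
      have hu : IsUnit (x - y) := by
        apply hunit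
        rw [map_sub, hc]
        intro h0
        have h3 : (2 : ZMod p) * r y = 0 := by linear_combination -h0
        rcases mul_eq_zero.mp h3 with h | h
        exacts [h2 h, hry0 h]
      have hz : (x - y) * (x + y) = (x - y) * 0 := by
        rw [mul_zero]; linear_combination hx - hy
      exact eq_neg_of_add_eq_zero_left (hu.mul_left_cancel hz)
  rcases isEmpty_or_nonempty {x : ZMod (p ^ k) // x ^ 2 = -1} with h | ⟨⟨x₀, hx₀⟩⟩
  · simp [Nat.card_of_isEmpty]
  · have h1 : Nat.card {x : ZMod (p ^ k) // x ^ 2 = -1} ≤ Nat.card Bool := by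
      apply Nat.card_le_card_of_injective (fun x => decide (x.1 = x₀))
      intro a b hab
      rw [decide_eq_decide] at hab
      by_cases h1 : a.1 = x₀
      · exact Subtype.ext (h1.trans (hab.mp h1).symm)
      · have hb : b.1 ≠ x₀ := fun h => h1 (hab.mpr h)
        rcases key a.1 x₀ a.2 hx₀ with ha | ha
        · exact absurd ha h1
        rcases key b.1 x₀ b.2 hx₀ with hbb | hbb
        · exact absurd hbb hb
        exact Subtype.ext (ha.trans hbb.symm)
    simpa using h1

lemma cardA {p : ℕ} (hp : p.Prime) (e f : ℕ) (hef : 2 * f ≥ e) :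
    Nat.card { B : ZMod (p ^ e) // B ^ 2 = -(p : ZMod (p ^ e)) ^ (2 * f) } ≤ p ^ (e / 2) := by
  haveI : NeZero (p ^ e) := ⟨pow_ne_zero _ hp.ne_zero⟩
  set h := e - e / 2 with hh
  have hdvd : ∀ B : { B : ZMod (p ^ e) // B ^ 2 = -(p : ZMod (p ^ e)) ^ (2 * f) },
      p ^ h ∣ B.1.val := by
    intro B
    have hB : ((B.1.val ^ 2 : ℕ) : ZMod (p ^ e)) = 0 := by
      push_cast
      rw [ZMod.natCast_val, ZMod.cast_id, B.2]
      have h0 : ((p ^ (2 * f) : ℕ) : ZMod (p ^ e)) = 0 :=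
        (ZMod.natCast_eq_zero_iff _ _).mpr (pow_dvd_pow p hef)
      push_cast at h0
      rw [h0, neg_zero]
    have hd : p ^ e ∣ B.1.val ^ 2 := (ZMod.natCast_eq_zero_iff _ _).mp hB
    exact pow_dvd_of_pow_dvd_sq_s15 hp hd (by omega)
  have hlt : ∀ B : { B : ZMod (p ^ e) // B ^ 2 = -(p : ZMod (p ^ e)) ^ (2 * f) },
      B.1.val / p ^ h < p ^ (e / 2) := by
    intro B
    apply Nat.div_lt_of_lt_mul
    have h2 : p ^ h * p ^ (e / 2) = p ^ e := by rw [← pow_add]; congr 1; omega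
    rw [h2]
    exact ZMod.val_lt _
  have hinj : Nat.card { B : ZMod (p ^ e) // B ^ 2 = -(p : ZMod (p ^ e)) ^ (2 * f) }
      ≤ Nat.card (Fin (p ^ (e / 2))) := by
    apply Nat.card_le_card_of_injective (fun B => (⟨B.1.val / p ^ h, hlt B⟩ : Fin (p ^ (e / 2))))
    intro a b hab
    simp only [Fin.mk.injEq] at hab
    have ha := Nat.div_mul_cancel (hdvd a)
    have hb := Nat.div_mul_cancel (hdvd b)
    have hval : a.1.val = b.1.val := by rw [← ha, ← hb, hab]
    exact Subtype.ext (ZMod.val_injective _ hval)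
  simpa using hinj

lemma cardB {p : ℕ} (hp : p.Prime) (e f : ℕ) (hef : 2 * f < e) :
    Nat.card { B : ZMod (p ^ e) // B ^ 2 = -(p : ZMod (p ^ e)) ^ (2 * f) }
      ≤ Nat.card { x : ZMod (p ^ (e - 2 * f)) // x ^ 2 = -1 } * p ^ f := by
  haveI : NeZero (p ^ e) := ⟨pow_ne_zero _ hp.ne_zero⟩
  haveI : NeZero (p ^ (e - 2 * f)) := ⟨pow_ne_zero _ hp.ne_zero⟩
  set q := e - 2 * f with hq
  have main : ∀ B : { B : ZMod (p ^ e) // B ^ 2 = -(p : ZMod (p ^ e)) ^ (2 * f) },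
      p ^ f ∣ B.1.val ∧ p ^ q ∣ (B.1.val / p ^ f) ^ 2 + 1 := by
    intro B
    have hB : ((B.1.val ^ 2 + p ^ (2 * f) : ℕ) : ZMod (p ^ e)) = 0 := by
      push_cast
      rw [ZMod.natCast_val, ZMod.cast_id, B.2]
      ring
    have hd : p ^ e ∣ B.1.val ^ 2 + p ^ (2 * f) := (ZMod.natCast_eq_zero_iff _ _).mp hB
    have h2f : p ^ (2 * f) ∣ B.1.val ^ 2 := by
      have h1 : p ^ (2 * f) ∣ B.1.val ^ 2 + p ^ (2 * f) :=
        dvd_trans (pow_dvd_pow p hef.le) hd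
      simpa using (Nat.dvd_sub h1 dvd_rfl)
    have hf : p ^ f ∣ B.1.val := pow_dvd_of_pow_dvd_sq_s15 hp h2f (by omega)
    refine ⟨hf, ?_⟩
    obtain ⟨c, hc⟩ := hf
    have hcv : B.1.val / p ^ f = c := by rw [hc, Nat.mul_div_cancel_left _ (pow_pos hp.pos _)]
    rw [hcv]
    have heq : B.1.val ^ 2 + p ^ (2 * f) = p ^ (2 * f) * (c ^ 2 + 1) := by
      rw [hc, two_mul, pow_add]; ring
    rw [heq] at hd
    have hsplit : p ^ e = p ^ (2 * f) * p ^ q := by rw [← pow_add]; congr 1; omega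
    rw [hsplit] at hd
    exact (Nat.mul_dvd_mul_iff_left (pow_pos hp.pos (2 * f))).mp hd
  have hlt2 : ∀ B : { B : ZMod (p ^ e) // B ^ 2 = -(p : ZMod (p ^ e)) ^ (2 * f) },
      B.1.val / p ^ f / p ^ q < p ^ f := by
    intro B
    apply Nat.div_lt_of_lt_mul
    apply Nat.div_lt_of_lt_mul
    have h2 : p ^ f * (p ^ q * p ^ f) = p ^ e := by rw [← pow_add, ← pow_add]; congr 1; omega
    rw [h2]
    exact ZMod.val_lt _
  have hinj : Nat.card { B : ZMod (p ^ e) // B ^ 2 = -(p : ZMod (p ^ e)) ^ (2 * f) }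
      ≤ Nat.card ({ x : ZMod (p ^ q) // x ^ 2 = -1 } × Fin (p ^ f)) := by
    apply Nat.card_le_card_of_injective
      (fun B => (⟨((B.1.val / p ^ f : ℕ) : ZMod (p ^ q)), by
          have h1 := (main B).2
          have h0 : (((B.1.val / p ^ f) ^ 2 + 1 : ℕ) : ZMod (p ^ q)) = 0 :=
            (ZMod.natCast_eq_zero_iff _ _).mpr h1
          push_cast at h0
          linear_combination h0⟩,
        (⟨B.1.val / p ^ f / p ^ q, hlt2 B⟩ : Fin (p ^ f))))
    intro a b hab
    simp only [Prod.mk.injEq, Subtype.mk.injEq, Fin.mk.injEq] at hab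
    obtain ⟨h1, h2⟩ := hab
    have hmod : a.1.val / p ^ f % p ^ q = b.1.val / p ^ f % p ^ q :=
      (ZMod.natCast_eq_natCast_iff _ _ _).mp h1
    have hda := Nat.div_add_mod (a.1.val / p ^ f) (p ^ q)
    have hdb := Nat.div_add_mod (b.1.val / p ^ f) (p ^ q)
    rw [h2, hmod] at hda
    have hc : a.1.val / p ^ f = b.1.val / p ^ f := hda.symm.trans hdb
    have ha := Nat.div_mul_cancel (main a).1
    have hb := Nat.div_mul_cancel (main b).1
    have hval : a.1.val = b.1.val := by rw [← ha, ← hb, hc]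
    exact Subtype.ext (ZMod.val_injective _ hval)
  calc Nat.card { B : ZMod (p ^ e) // B ^ 2 = -(p : ZMod (p ^ e)) ^ (2 * f) }
      ≤ Nat.card ({ x : ZMod (p ^ q) // x ^ 2 = -1 } × Fin (p ^ f)) := hinj
    _ = Nat.card { x : ZMod (p ^ q) // x ^ 2 = -1 } * p ^ f := by
        rw [Nat.card_prod]; simp


lemma cardB' {p : ℕ} (hp : p.Prime) (hodd : Odd p) (e f : ℕ) (hef : 2 * f < e) :
    Nat.card { B : ZMod (p ^ e) // B ^ 2 = -(p : ZMod (p ^ e)) ^ (2 * f) } ≤ 2 * p ^ f :=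
  (cardB hp e f hef).trans (Nat.mul_le_mul_right _ (sqrt_neg_one_card hp hodd _))

lemma cardA' {p : ℕ} (hp : p.Prime) (e f : ℕ) (hef : 2 * f ≥ e) :
    Nat.card { B : ZMod (p ^ e) // B ^ 2 = -(p : ZMod (p ^ e)) ^ (2 * f) } ≤ p ^ (e / 2) :=
  cardA hp e f hef
theorem count_sqrt_of_neg_prime_power (p : ℕ) (hp : p.Prime) (hodd : Odd p) (e f : ℕ) :
    (2 * f ≥ e →
      (Nat.card { B : ZMod (p ^ e) // B ^ 2 = -(p : ZMod (p ^ e)) ^ (2 * f) } : ℝ)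
        ≤ (p : ℝ) ^ ((e : ℝ) / 2)) ∧
    (2 * f < e →
      (Nat.card { B : ZMod (p ^ e) // B ^ 2 = -(p : ZMod (p ^ e)) ^ (2 * f) } : ℝ)
        ≤ 2 * (p : ℝ) ^ (f : ℕ)) ∧
    (Nat.card { B : ZMod (p ^ e) // B ^ 2 = -(p : ZMod (p ^ e)) ^ (2 * f) } : ℝ)
      ≤ 2 * min ((p : ℝ) ^ ((e : ℝ) / 2)) ((p : ℝ) ^ (f : ℕ)) := by
  have hp1 : (1 : ℝ) ≤ (p : ℝ) := by exact_mod_cast hp.one_lt.le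
  have part1 : 2 * f ≥ e →
      (Nat.card { B : ZMod (p ^ e) // B ^ 2 = -(p : ZMod (p ^ e)) ^ (2 * f) } : ℝ)
        ≤ (p : ℝ) ^ ((e : ℝ) / 2) := by
    intro hef
    have h1 : (Nat.card { B : ZMod (p ^ e) // B ^ 2 = -(p : ZMod (p ^ e)) ^ (2 * f) } : ℝ)
        ≤ ((p ^ (e / 2) : ℕ) : ℝ) := by exact_mod_cast cardA' hp e f hef
    refine h1.trans ?_
    push_cast
    rw [← Real.rpow_natCast (p : ℝ) (e / 2)]
    apply Real.rpow_le_rpow_of_exponent_le hp1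
    calc ((e / 2 : ℕ) : ℝ) ≤ (e : ℝ) / (2 : ℕ) := Nat.cast_div_le
      _ = (e : ℝ) / 2 := by norm_num
  have part2 : 2 * f < e →
      (Nat.card { B : ZMod (p ^ e) // B ^ 2 = -(p : ZMod (p ^ e)) ^ (2 * f) } : ℝ)
        ≤ 2 * (p : ℝ) ^ (f : ℕ) := by
    intro hef
    have h1 := cardB' hp hodd e f hef
    exact_mod_cast h1
  refine ⟨part1, part2, ?_⟩
  rcases le_or_gt e (2 * f) with hef | hef
  · have h1 := part1 hef
    have h2 : (p : ℝ) ^ ((e : ℝ) / 2) ≤ (p : ℝ) ^ (f : ℕ) := by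
      rw [← Real.rpow_natCast (p : ℝ) f]
      apply Real.rpow_le_rpow_of_exponent_le hp1
      have : (e : ℝ) ≤ 2 * (f : ℝ) := by exact_mod_cast hef
      linarith
    have hmin : min ((p : ℝ) ^ ((e : ℝ) / 2)) ((p : ℝ) ^ (f : ℕ)) = (p : ℝ) ^ ((e : ℝ) / 2) :=
      min_eq_left h2
    rw [hmin]
    have hnn : (0 : ℝ) ≤ (p : ℝ) ^ ((e : ℝ) / 2) := Real.rpow_nonneg (by linarith) _
    linarith
  · have h1 := part2 hef
    have h2 : (p : ℝ) ^ (f : ℕ) ≤ (p : ℝ) ^ ((e : ℝ) / 2) := by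
      rw [← Real.rpow_natCast (p : ℝ) f]
      apply Real.rpow_le_rpow_of_exponent_le hp1
      have : 2 * (f : ℝ) ≤ (e : ℝ) := by exact_mod_cast hef.le
      linarith
    rw [min_eq_right h2]
    exact h1
end

section
/- Let p ≥ 5 be prime and m ≥ 1. For every x ∈ ℤ/p^mℤ there exist k ≤ 4 and units a₁,…,a_k ∈ (ℤ/p^mℤ)ˣ such that x = a₁² + ⋯ + a_k². -/
/-!
Reduction modulo `p` maps `(ZMod (p ^ m))ˣ` onto `(ZMod p)ˣ` with kernel of odd order `p ^ (m - 1)`,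
so a unit of `ZMod (p ^ m)` is a square as soon as its reduction is; this replaces Hensel lifting.
A nonzero residue mod `p` is `c ^ 2 + b ^ 2` with `b ≠ 0`; if `c ≠ 0`, lift it to a unit `c'`, and
`x - c' ^ 2` reduces to the nonzero square `b ^ 2`. So every unit is a sum of one or two unit
squares, and a non-unit `x` is `(x - 2) + 1 ^ 2 + 1 ^ 2` with `x - 2` a unit because `p` is odd.
-/

theorem isSquare_of_isSquare_map_of_odd_card_ker {G H : Type*} [CommGroup G] [Group H]
    (f : G →* H) (hf : Function.Surjective f) (hker : Odd (Nat.card f.ker)) {g : G}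
    (hg : IsSquare (f g)) : IsSquare g := by
  obtain ⟨r, hr⟩ := hg
  obtain ⟨w, rfl⟩ := hf r
  have hk : g * (w * w)⁻¹ ∈ f.ker := by simp [hr]
  obtain ⟨s, hs⟩ := (Nat.Coprime.pow_left_bijective (n := 2) hker.coprime_two_right).surjective
    ⟨_, hk⟩
  have hs' : (s : G) ^ 2 = g * (w * w)⁻¹ := congrArg Subtype.val hs
  exact ⟨w * s, by rw [mul_mul_mul_comm, ← sq (s : G), hs', mul_comm, inv_mul_cancel_right]⟩

namespace ZMod

variable {p m : ℕ} [Fact p.Prime]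

theorem card_ker_unitsMap_prime_pow (hm : m ≠ 0) :
    Nat.card (unitsMap (dvd_pow_self p hm)).ker = p ^ (m - 1) := by
  have hp := (Fact.out : p.Prime)
  have h := Subgroup.card_mul_index (unitsMap (dvd_pow_self p hm)).ker
  rw [Subgroup.index_ker, MonoidHom.range_eq_top_of_surjective _ (unitsMap_surjective _),
    Subgroup.card_top, Nat.card_eq_fintype_card (α := (ZMod p)ˣ),
    Nat.card_eq_fintype_card (α := (ZMod (p ^ m))ˣ), card_units_eq_totient,
    card_units_eq_totient, Nat.totient_prime hp, Nat.totient_prime_pow hp (by omega)] at h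
  exact Nat.eq_of_mul_eq_mul_right (by have := hp.two_le; omega) h

theorem isUnit_of_castHom_ne_zero (hm : m ≠ 0) {x : ZMod (p ^ m)}
    (hx : castHom (dvd_pow_self p hm) (ZMod p) x ≠ 0) : IsUnit x := by
  rw [← natCast_zmod_val x, castHom_apply, cast_natCast (dvd_pow_self p hm), Ne,
    natCast_eq_zero_iff] at hx
  rw [← natCast_zmod_val x, isUnit_natCast_iff_not_dvd_pow Fact.out (by omega)]
  exact hx

theorem exists_unit_sq_eq_of_castHom_eq_sq (hp2 : p ≠ 2) (hm : m ≠ 0) {x : ZMod (p ^ m)}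
    {b : ZMod p} (hb : b ≠ 0) (hx : castHom (dvd_pow_self p hm) (ZMod p) x = b ^ 2) :
    ∃ a : (ZMod (p ^ m))ˣ, x = a ^ 2 := by
  have hu := isUnit_of_castHom_ne_zero hm (hx ▸ pow_ne_zero 2 hb)
  have hodd : Odd (Nat.card (unitsMap (dvd_pow_self p hm)).ker) := by
    rw [card_ker_unitsMap_prime_pow hm]
    exact ((Fact.out : p.Prime).odd_of_ne_two hp2).pow
  obtain ⟨a, ha⟩ := isSquare_of_isSquare_map_of_odd_card_ker _ (unitsMap_surjective _) hodd
    (g := hu.unit) ⟨Units.mk0 b hb, Units.ext <| by simpa [unitsMap_val, sq] using hx⟩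
  exact ⟨a, by rw [sq, ← Units.val_mul, ← ha, IsUnit.unit_spec]⟩

theorem exists_sq_add_sq_ne_zero {u : ZMod p} (hu : u ≠ 0) :
    ∃ c b : ZMod p, b ≠ 0 ∧ c ^ 2 + b ^ 2 = u := by
  obtain ⟨a, b, hab⟩ := sq_add_sq p u
  by_cases hb : b = 0
  · subst hb
    exact ⟨0, a, by rintro rfl; simp [← hab] at hu, by rw [← hab]; ring⟩
  · exact ⟨a, b, hb, hab⟩

theorem exists_unit_sq_sum_of_castHom_ne_zero (hp2 : p ≠ 2) (hm : m ≠ 0) {x : ZMod (p ^ m)}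
    (hx : castHom (dvd_pow_self p hm) (ZMod p) x ≠ 0) :
    ∃ k ≤ 2, ∃ a : Fin k → (ZMod (p ^ m))ˣ, x = ∑ i, (a i : ZMod (p ^ m)) ^ 2 := by
  obtain ⟨c, b, hb, hcb⟩ := exists_sq_add_sq_ne_zero hx
  by_cases hc : c = 0
  · obtain ⟨a, ha⟩ := exists_unit_sq_eq_of_castHom_eq_sq hp2 hm hb (x := x)
      (by rw [← hcb, hc]; ring)
    exact ⟨1, by omega, ![a], by simp [ha]⟩
  · obtain ⟨c', hc'⟩ := unitsMap_surjective (dvd_pow_self p hm) (Units.mk0 c hc)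
    have hc'c : castHom (dvd_pow_self p hm) (ZMod p) c' = c := by
      simpa [unitsMap_val] using congrArg Units.val hc'
    obtain ⟨a, ha⟩ := exists_unit_sq_eq_of_castHom_eq_sq hp2 hm hb
      (x := x - c' ^ 2) (by rw [map_sub, map_pow, hc'c, ← hcb, add_sub_cancel_left])
    exact ⟨2, le_rfl, ![c', a], by simp [Fin.sum_univ_two, ← ha]⟩

end ZMod

theorem sum_of_four_unit_squares (p : ℕ) (hp : p.Prime) (hp5 : 5 ≤ p) (m : ℕ) (hm : 1 ≤ m)
    (x : ZMod (p ^ m)) :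
    ∃ k : ℕ, k ≤ 4 ∧ ∃ a : Fin k → (ZMod (p ^ m))ˣ,
      x = ∑ i, ((a i : ZMod (p ^ m))) ^ 2 := by
  have := Fact.mk hp
  have hm0 : m ≠ 0 := by omega
  have hp2 : p ≠ 2 := by omega
  set ρ := ZMod.castHom (dvd_pow_self p hm0) (ZMod p)
  by_cases hx : ρ x = 0
  · have h2 : ρ (x - 2) ≠ 0 := by
      rw [map_sub, hx, map_ofNat, zero_sub, neg_ne_zero]
      exact Ring.two_ne_zero (by rwa [ZMod.ringChar_zmod_n])
    obtain ⟨k, hk, a, ha⟩ := ZMod.exists_unit_sq_sum_of_castHom_ne_zero hp2 hm0 h2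
    refine ⟨k + 2, by omega, Fin.append a ![1, 1], ?_⟩
    rw [Fin.sum_univ_add]
    simp only [Fin.append_left, ← ha, Fin.append_right, Fin.sum_univ_two, Fin.isValue,
      Matrix.cons_val_zero, Matrix.cons_val_one, Matrix.cons_val_fin_one, Units.val_one, one_pow]
    ring
  · obtain ⟨k, hk, h⟩ := ZMod.exists_unit_sq_sum_of_castHom_ne_zero hp2 hm0 hx
    exact ⟨k, by omega, h⟩
end
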